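/- arXiv:1907.09042 — 6 statements merged into one kernel-verified Lean document; each statement's English description precedes it below -/
import Mathlib

section
/- Let D be a connected graph such that every triangle of D separates D: removing the three vertices of any triangle (together with incident edges) disconnects the graph into at least two components. Suppose further that for all vertices x, y at distance ≥ 2 and any vertex p on a geodesic from x to y with d(p,x) ≥ 1 and d(p,y) ≥ 1, there is a triangle Δ containing p that separates x from y. Then D satisfies Manning's bottleneck property: there is L > 0 such that for all vertices x, y there is a midpoint m on a geodesic from x to y with the property that every path from x to y passes within distance L of m. -/
private lemma dist_getVert_left {V : Type*} {G : SimpleGraph V} (hconn : G.Connected) :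
    ∀ {x y : V} (w : G.Walk x y) (n : ℕ), G.dist x (w.getVert n) ≤ n := by
  intro x y w
  induction w with
  | nil => intro n; simp [SimpleGraph.Walk.getVert, SimpleGraph.dist_self]
  | @cons u v z h q ih =>
    intro n
    cases n with
    | zero => simp
    | succ n =>
      rw [SimpleGraph.Walk.getVert_cons_succ]
      have h1 : G.dist u (q.getVert n) ≤ G.dist u v + G.dist v (q.getVert n) :=
        hconn.dist_triangle
      have h2 : G.dist u v ≤ 1 :=
        le_trans (SimpleGraph.dist_le (SimpleGraph.Walk.cons h .nil)) (by simp)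
      have h3 := ih n
      omega

private lemma dist_getVert_right {V : Type*} {G : SimpleGraph V} :
    ∀ {x y : V} (w : G.Walk x y) (n : ℕ), G.dist (w.getVert n) y ≤ w.length - n := by
  intro x y w
  induction w with
  | nil => intro n; simp [SimpleGraph.Walk.getVert, SimpleGraph.dist_self]
  | cons h q ih =>
    intro n
    cases n with
    | zero =>
      simpa using SimpleGraph.dist_le (SimpleGraph.Walk.cons h q)
    | succ n =>
      rw [SimpleGraph.Walk.getVert_cons_succ]
      simpa using ih n

/-- a connected graph in which every triangle separates the graph and in
which every interior vertex of a geodesic lies on a triangle separating the endpoints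
satisfies Manning's bottleneck property: there is `L > 0` such that for all `x, y`
there is a midpoint `m` on a geodesic from `x` to `y` (a vertex-midpoint, i.e. the two
half-distances differ by at most `1`) such that every path from `x` to `y` passes
within distance `< L` of `m`. -/
theorem bottleneck_of_separating_triangles {V : Type*} (G : SimpleGraph V)
    (hconn : G.Connected)
    (hsep : ∀ a b c : V, G.Adj a b → G.Adj b c → G.Adj a c →
      ∃ x y : V, x ∉ ({a, b, c} : Set V) ∧ y ∉ ({a, b, c} : Set V) ∧
        ∀ w : G.Walk x y, a ∈ w.support ∨ b ∈ w.support ∨ c ∈ w.support)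
    (hbot : ∀ x y p : V, G.dist x p + G.dist p y = G.dist x y →
      1 ≤ G.dist p x → 1 ≤ G.dist p y →
      ∃ a b c : V, G.Adj a b ∧ G.Adj b c ∧ G.Adj a c ∧ (p = a ∨ p = b ∨ p = c) ∧
        ∀ w : G.Walk x y, a ∈ w.support ∨ b ∈ w.support ∨ c ∈ w.support) :
    ∃ L : ℝ, 0 < L ∧ ∀ x y : V, ∃ m : V,
      G.dist x m + G.dist m y = G.dist x y ∧
      |(G.dist x m : ℤ) - (G.dist y m : ℤ)| ≤ 1 ∧
      ∀ w : G.Walk x y, ∃ v ∈ w.support, (G.dist v m : ℝ) < L := by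
  refine ⟨2, by norm_num, fun x y => ?_⟩
  set d := G.dist x y with hd
  by_cases hsmall : d ≤ 1
  · refine ⟨x, by simp [hd], ?_, fun w => ⟨x, w.start_mem_support, by
      simp [SimpleGraph.dist_self]⟩⟩
    have h' : G.dist y x = d := by rw [SimpleGraph.dist_comm]
    simp only [SimpleGraph.dist_self, h', Nat.cast_zero, zero_sub, abs_neg, Nat.abs_cast]
    exact_mod_cast hsmall
  · push_neg at hsmall
    obtain ⟨w, hw⟩ := hconn.exists_walk_length_eq_dist x y
    set n := d / 2 with hn
    set m := w.getVert n with hm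
    have h1 : G.dist x m ≤ n := dist_getVert_left hconn w n
    have h2 : G.dist m y ≤ d - n := by
      have := dist_getVert_right w n
      rwa [hw, ← hd] at this
    have htri : d ≤ G.dist x m + G.dist m y := hconn.dist_triangle
    have hxm : G.dist x m = n := by omega
    have hmy : G.dist m y = d - n := by omega
    have hsum : G.dist x m + G.dist m y = d := by omega
    refine ⟨m, hsum, ?_, ?_⟩
    · have hym : G.dist y m = d - n := by rw [SimpleGraph.dist_comm]; exact hmy
      rw [hxm, hym, abs_le]
      constructor <;> [skip; skip] <;> omega
    · have hmx1 : 1 ≤ G.dist m x := by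
        rw [SimpleGraph.dist_comm, hxm]; omega
      have hmy1 : 1 ≤ G.dist m y := by rw [hmy]; omega
      obtain ⟨a, b, c, hab, hbc, hac, hmem, hhit⟩ := hbot x y m hsum hmx1 hmy1
      intro w'
      have hdist : ∀ u v : V, G.Adj u v → (G.dist u v : ℝ) ≤ 1 := by
        intro u v huv
        have := SimpleGraph.dist_le (SimpleGraph.Walk.cons huv .nil)
        simp at this
        exact_mod_cast this
      obtain hv | hv | hv := hhit w'
      · refine ⟨a, hv, ?_⟩
        rcases hmem with h | h | h <;> rw [h]
        · simp [SimpleGraph.dist_self]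
        · exact lt_of_le_of_lt (hdist a b hab) (by norm_num)
        · exact lt_of_le_of_lt (hdist a c hac) (by norm_num)
      · refine ⟨b, hv, ?_⟩
        rcases hmem with h | h | h <;> rw [h]
        · exact lt_of_le_of_lt (hdist b a hab.symm) (by norm_num)
        · simp [SimpleGraph.dist_self]
        · exact lt_of_le_of_lt (hdist b c hbc) (by norm_num)
      · refine ⟨c, hv, ?_⟩
        rcases hmem with h | h | h <;> rw [h]
        · exact lt_of_le_of_lt (hdist c a hac.symm) (by norm_num)
        · exact lt_of_le_of_lt (hdist c b hbc.symm) (by norm_num)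
        · simp [SimpleGraph.dist_self]
end

section
/- Let X be a geodesic metric space such that for every pair of points x, y and every point p on a geodesic from x to y with d(x,p) ≥ 3/2, there is a point p' with d(p,p') ≤ 1/2 such that every path from x to y passes within distance 1 of p'. Then every geodesic triangle in X is 3/2-thin, i.e., X is 3/2-hyperbolic. -/
/-- `γ` is a (unit-speed) geodesic from `x` to `y`, parametrised on `[0, dist x y]`. -/
def IsGeodesic {X : Type*} [MetricSpace X] (x y : X) (γ : ℝ → X) : Prop :=
  γ 0 = x ∧ γ (dist x y) = y ∧
    ∀ s ∈ Set.Icc (0 : ℝ) (dist x y), ∀ t ∈ Set.Icc (0 : ℝ) (dist x y),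
      dist (γ s) (γ t) = |s - t|

theorem IsGeodesic.continuousOn {X : Type*} [MetricSpace X] {x y : X} {γ : ℝ → X}
    (h : IsGeodesic x y γ) : ContinuousOn γ (Set.Icc (0 : ℝ) (dist x y)) := by
  apply LipschitzOnWith.continuousOn (K := 1)
  apply LipschitzOnWith.of_dist_le_mul
  intro s hs t ht
  rw [h.2.2 s hs t ht, Real.dist_eq, NNReal.coe_one, one_mul]

/-- a geodesic metric space in which, for every point `p` on a geodesic
from `x` to `y` with `dist x p ≥ 3/2`, there is a point `p'` with `dist p p' ≤ 1/2`
such that every path from `x` to `y` passes within distance `1` of `p'`, has all its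
geodesic triangles `3/2`-thin. -/
theorem thin_triangles_of_bottleneck {X : Type*} [MetricSpace X]
    (hgeo : ∀ x y : X, ∃ γ : ℝ → X, IsGeodesic x y γ)
    (hbot : ∀ x y : X, ∀ γ : ℝ → X, IsGeodesic x y γ →
      ∀ p ∈ γ '' Set.Icc (0 : ℝ) (dist x y), (3 / 2 : ℝ) ≤ dist x p →
        ∃ p' : X, dist p p' ≤ 1 / 2 ∧
          ∀ f : ℝ → X, ContinuousOn f (Set.Icc (0 : ℝ) 1) → f 0 = x → f 1 = y →
            ∃ t ∈ Set.Icc (0 : ℝ) 1, dist (f t) p' ≤ 1) :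
    ∀ x y z : X, ∀ γ₁ γ₂ γ₃ : ℝ → X,
      IsGeodesic x y γ₁ → IsGeodesic x z γ₂ → IsGeodesic y z γ₃ →
      ∀ p ∈ γ₁ '' Set.Icc (0 : ℝ) (dist x y),
        ∃ q ∈ (γ₂ '' Set.Icc (0 : ℝ) (dist x z)) ∪ (γ₃ '' Set.Icc (0 : ℝ) (dist y z)),
          dist p q ≤ 3 / 2 := by
  intro x y z γ₁ γ₂ γ₃ h1 h2 h3 p hp
  set a := dist x z with ha
  set b := dist y z with hb
  have ha0 : (0 : ℝ) ≤ a := dist_nonneg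
  have hb0 : (0 : ℝ) ≤ b := dist_nonneg
  rcases le_or_gt (3 / 2 : ℝ) (dist x p) with hge | hlt
  · obtain ⟨p', hpp', hpath⟩ := hbot x y γ₁ h1 p hp hge
    -- clamping functions
    set c₂ : ℝ → ℝ := fun t => max 0 (min (2 * t * a) a) with hc2
    set c₃ : ℝ → ℝ := fun t => max 0 (min ((2 - 2 * t) * b) b) with hc3
    have hc2mem : ∀ t, c₂ t ∈ Set.Icc (0 : ℝ) a := fun t =>
      ⟨le_max_left _ _, max_le ha0 (min_le_right _ _)⟩
    have hc3mem : ∀ t, c₃ t ∈ Set.Icc (0 : ℝ) b := fun t =>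
      ⟨le_max_left _ _, max_le hb0 (min_le_right _ _)⟩
    set f : ℝ → X := fun t => if t ≤ 1 / 2 then γ₂ (c₂ t) else γ₃ (c₃ t) with hf
    have hcont2 : Continuous fun t => γ₂ (c₂ t) := by
      apply h2.continuousOn.comp_continuous
      · fun_prop
      · exact hc2mem
    have hcont3 : Continuous fun t => γ₃ (c₃ t) := by
      apply h3.continuousOn.comp_continuous
      · fun_prop
      · exact hc3mem
    have hfcont : Continuous f := by
      apply hcont2.if_le hcont3 continuous_id continuous_const
      intro t ht
      have ht' : t = 1 / 2 := ht
      subst ht'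
      have hc2t : c₂ (1 / 2) = a := by
        simp only [hc2]; rw [show 2 * (1 / 2 : ℝ) * a = a by ring]
        rw [min_self, max_eq_right ha0]
      have hc3t : c₃ (1 / 2) = b := by
        simp only [hc3]; rw [show (2 - 2 * (1 / 2 : ℝ)) * b = b by ring]
        rw [min_self, max_eq_right hb0]
      rw [hc2t, hc3t, h2.2.1, h3.2.1]
    have hf0 : f 0 = x := by
      have : c₂ 0 = 0 := by simp [hc2, min_eq_left ha0]
      simp only [hf]
      rw [if_pos (by norm_num), this, h2.1]
    have hf1 : f 1 = y := by
      have : c₃ 1 = 0 := by simp [hc3]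
      simp only [hf]
      rw [if_neg (by norm_num), this, h3.1]
    obtain ⟨t, _, hdt⟩ := hpath f hfcont.continuousOn hf0 hf1
    refine ⟨f t, ?_, ?_⟩
    · by_cases h : t ≤ 1 / 2
      · left
        exact ⟨c₂ t, hc2mem t, by simp only [hf]; rw [if_pos h]⟩
      · right
        exact ⟨c₃ t, hc3mem t, by simp only [hf]; rw [if_neg h]⟩
    · calc dist p (f t) ≤ dist p p' + dist p' (f t) := dist_triangle _ _ _
        _ ≤ 1 / 2 + 1 := by
            rw [dist_comm p' (f t)]; exact add_le_add hpp' hdt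
        _ = 3 / 2 := by norm_num
  · refine ⟨x, Or.inl ⟨0, ⟨le_refl 0, ha0⟩, h2.1⟩, ?_⟩
    rw [dist_comm]
    linarith
end

section
/- A metric graph (connected graph with all edges of length 1, path metric) satisfying the following separation property is quasi-isometric to a simplicial tree: for every pair of vertices x, y and every vertex p on a geodesic from x to y with d(p,x) ≥ 1 and d(p,y) ≥ 1, there exist at most 3 vertices including p whose removal separates x from y, all within distance 1 of p. -/
namespace QIT
variable {V : Type} (G : SimpleGraph V) (r : V)

/-- `u` and `v` are joined by a walk staying at distance `≥ k` from `r`. -/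
def Conn (k : ℕ) (u v : V) : Prop :=
  ∃ w : G.Walk u v, ∀ x ∈ w.support, k ≤ G.dist r x

variable {G r}

lemma Conn.le_left {k u v} (h : Conn G r k u v) : k ≤ G.dist r u := by
  obtain ⟨w, hw⟩ := h; exact hw u w.start_mem_support

lemma Conn.refl {k u} (h : k ≤ G.dist r u) : Conn G r k u u :=
  ⟨SimpleGraph.Walk.nil, by simpa using h⟩

lemma Conn.symm {k u v} (h : Conn G r k u v) : Conn G r k v u := by
  obtain ⟨w, hw⟩ := h
  exact ⟨w.reverse, by simpa [SimpleGraph.Walk.support_reverse] using hw⟩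

lemma Conn.trans {k u v x} (h : Conn G r k u v) (h' : Conn G r k v x) : Conn G r k u x := by
  obtain ⟨w, hw⟩ := h; obtain ⟨w', hw'⟩ := h'
  refine ⟨w.append w', fun y hy => ?_⟩
  rcases (SimpleGraph.Walk.mem_support_append_iff _ _).1 hy with h | h
  · exact hw y h
  · exact hw' y h

lemma Conn.mono {j k u v} (hjk : j ≤ k) (h : Conn G r k u v) : Conn G r j u v := by
  obtain ⟨w, hw⟩ := h; exact ⟨w, fun x hx => le_trans hjk (hw x hx)⟩

variable (G r)

/-- Carrier for tree vertices: pairs (level, vertex) with level ≤ dist. -/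
def D : Type := {p : ℕ × V // p.1 ≤ G.dist r p.2}

def dS : Setoid (D G r) where
  r a b := a.1.1 = b.1.1 ∧ Conn G r a.1.1 a.1.2 b.1.2
  iseqv := by
    constructor
    · exact fun a => ⟨rfl, Conn.refl a.2⟩
    · rintro a b ⟨h1, h2⟩; exact ⟨h1.symm, h1 ▸ h2.symm⟩
    · rintro a b c ⟨h1, h2⟩ ⟨h3, h4⟩; exact ⟨h1.trans h3, h2.trans (h1 ▸ h4)⟩

def W : Type := Quotient (dS G r)

def mkW (k : ℕ) (u : V) (h : k ≤ G.dist r u) : W G r := Quotient.mk (dS G r) ⟨(k, u), h⟩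

lemma mkW_eq_iff {k k' : ℕ} {u u' : V} (h : k ≤ G.dist r u) (h' : k' ≤ G.dist r u') :
    mkW G r k u h = mkW G r k' u' h' ↔ k = k' ∧ Conn G r k u u' :=
  ⟨fun he => Quotient.exact he, fun hr => Quotient.sound hr⟩

def lvl : W G r → ℕ := Quotient.lift (fun a => a.1.1) (fun _ _ h => h.1)

@[simp] lemma lvl_mkW {k u} (h : k ≤ G.dist r u) : lvl G r (mkW G r k u h) = k := rfl

def parent : W G r → W G r :=
  Quotient.lift (fun a => mkW G r (a.1.1 - 1) a.1.2 (le_trans (Nat.sub_le _ _) a.2))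
    (fun a b hab => by
      apply Quotient.sound
      refine ⟨by simp [hab.1], ?_⟩
      exact (hab.2.mono (Nat.sub_le _ _)))

@[simp] lemma parent_mkW {k u} (h : k ≤ G.dist r u) :
    parent G r (mkW G r k u h) = mkW G r (k - 1) u (le_trans (Nat.sub_le _ _) h) := rfl

lemma lvl_parent (a : W G r) : lvl G r (parent G r a) = lvl G r a - 1 := by
  induction a using Quotient.inductionOn with
  | h a => rfl

def T : SimpleGraph (W G r) :=
  SimpleGraph.fromRel (fun a b => lvl G r b + 1 = lvl G r a ∧ parent G r a = b)

lemma adj_parent {a : W G r} (h : 1 ≤ lvl G r a) : (T G r).Adj a (parent G r a) := by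
  refine ⟨fun he => by have h2 := lvl_parent G r a; rw [← he] at h2; omega, Or.inl ⟨?_, rfl⟩⟩
  · rw [lvl_parent]; omega

lemma adj_cases {a b : W G r} (h : (T G r).Adj a b) :
    (lvl G r b + 1 = lvl G r a ∧ parent G r a = b) ∨
      (lvl G r a + 1 = lvl G r b ∧ parent G r b = a) := h.2

lemma lvl_iter (m : ℕ) (a : W G r) : lvl G r ((parent G r)^[m] a) = lvl G r a - m := by
  induction m generalizing a with
  | zero => simp
  | succ n ih =>
      rw [Function.iterate_succ_apply, ih, lvl_parent]
      omega

def anc (k : ℕ) (a : W G r) : W G r := (parent G r)^[lvl G r a - k] a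

lemma lvl_anc (k : ℕ) (a : W G r) : lvl G r (anc G r k a) = min k (lvl G r a) := by
  rw [anc, lvl_iter]; omega

lemma anc_of_le {k : ℕ} {a : W G r} (h : lvl G r a ≤ k) : anc G r k a = a := by
  rw [anc, Nat.sub_eq_zero_of_le h, Function.iterate_zero_apply]

lemma anc_anc {j k : ℕ} (hkj : k ≤ j) (a : W G r) :
    anc G r k (anc G r j a) = anc G r k a := by
  unfold anc
  rw [lvl_iter, ← Function.iterate_add_apply]
  congr 1
  omega

lemma anc_parent {k : ℕ} {a : W G r} (h : k + 1 ≤ lvl G r a) :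
    anc G r k (parent G r a) = anc G r k a := by
  rw [anc, lvl_parent, ← Function.iterate_succ_apply, anc]
  congr 1
  omega

lemma anc_adj {k : ℕ} {a b : W G r} (h : (T G r).Adj a b) (ha : k ≤ lvl G r a)
    (hb : k ≤ lvl G r b) : anc G r k a = anc G r k b := by
  rcases adj_cases G r h with ⟨h1, h2⟩ | ⟨h1, h2⟩
  · rw [← h2, anc_parent]; omega
  · rw [← h2, anc_parent]; omega

lemma iter_mkW (m k : ℕ) (u : V) (h : k ≤ G.dist r u) :
    (parent G r)^[m] (mkW G r k u h) = mkW G r (k - m) u (le_trans (Nat.sub_le _ _) h) := by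
  induction m with
  | zero => simp
  | succ n ih =>
      rw [Function.iterate_succ_apply', ih, parent_mkW]
      simp only [Nat.sub_sub]

lemma anc_mkW {j k : ℕ} (u : V) (h : k ≤ G.dist r u) (hjk : j ≤ k) :
    anc G r j (mkW G r k u h) = mkW G r j u (le_trans hjk h) := by
  rw [anc, lvl_mkW, iter_mkW]
  congr 1
  omega


lemma anc_parent_eq {k : ℕ} {a c : W G r} (h2 : parent G r a = c) (h : k + 1 ≤ lvl G r a) :
    anc G r k a = anc G r k c := by subst h2; exact (anc_parent G r h).symm

lemma anc_pred {x m : W G r} (h2 : parent G r x = m) (h1 : lvl G r m + 1 = lvl G r x) :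
    anc G r (lvl G r m) x = m := by
  rw [anc]
  have hh : lvl G r x - lvl G r m = 1 := by omega
  rw [hh, Function.iterate_one, h2]

lemma walk_meet {a b : W G r} (w : (T G r).Walk a b) :
    ∃ K, K ≤ lvl G r a ∧ K ≤ lvl G r b ∧ anc G r K a = anc G r K b ∧
      (lvl G r a - K) + (lvl G r b - K) ≤ w.length ∧ anc G r K a ∈ w.support := by
  induction w with
  | nil =>
      refine ⟨_, le_rfl, le_rfl, rfl, by simp, ?_⟩
      rw [anc_of_le G r le_rfl]; simp
  | @cons a c b hadj w' ih =>
      obtain ⟨K', hK1, hK2, hK3, hK4, hK5⟩ := ih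
      rcases adj_cases G r hadj with ⟨h1, h2⟩ | ⟨h1, h2⟩
      · -- c = parent a
        have he : anc G r K' a = anc G r K' c := anc_parent_eq G r h2 (by omega)
        refine ⟨K', by omega, hK2, he.trans hK3, ?_, ?_⟩
        · simp only [SimpleGraph.Walk.length_cons]; omega
        · rw [SimpleGraph.Walk.support_cons, he]
          exact List.mem_cons_of_mem _ hK5
      · -- a = parent c
        by_cases hK : K' ≤ lvl G r a
        · have he : anc G r K' c = anc G r K' a := anc_parent_eq G r h2 (by omega)
          refine ⟨K', hK, hK2, he.symm.trans hK3, ?_, ?_⟩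
          · simp only [SimpleGraph.Walk.length_cons]; omega
          · rw [SimpleGraph.Walk.support_cons, he.symm]
            exact List.mem_cons_of_mem _ hK5
        · have hK' : K' = lvl G r a + 1 := by omega
          have ha : anc G r (lvl G r a) c = a :=
            (anc_parent_eq G r h2 (by omega)).trans (anc_of_le G r le_rfl)
          refine ⟨lvl G r a, le_rfl, by omega, ?_, ?_, ?_⟩
          · rw [anc_of_le G r le_rfl]
            calc a = anc G r (lvl G r a) c := ha.symm
              _ = anc G r (lvl G r a) (anc G r K' c) := by
                    rw [anc_anc G r (by omega)]
              _ = anc G r (lvl G r a) (anc G r K' b) := by rw [hK3]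
              _ = anc G r (lvl G r a) b := anc_anc G r (by omega) b
          · simp only [SimpleGraph.Walk.length_cons]; omega
          · rw [anc_of_le G r le_rfl]
            exact SimpleGraph.Walk.start_mem_support _

lemma exists_walk_anc (k : ℕ) : ∀ (n : ℕ) (a : W G r), lvl G r a - k = n →
    ∃ w : (T G r).Walk a (anc G r k a), w.length = n := by
  intro n
  induction n with
  | zero =>
      intro a ha
      rw [anc_of_le G r (by omega)]
      exact ⟨.nil, rfl⟩
  | succ n ih =>
      intro a ha
      have hadj := adj_parent G r (a := a) (by omega)
      obtain ⟨w, hw⟩ := ih (parent G r a) (by rw [lvl_parent]; omega)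
      refine ⟨.cons hadj (w.copy rfl (anc_parent G r (by omega))), by simp [hw]⟩

lemma anc_zero_eq (hconn : G.Connected) (a b : W G r) : anc G r 0 a = anc G r 0 b := by
  induction a using Quotient.inductionOn with
  | h x =>
    induction b using Quotient.inductionOn with
    | h y =>
      obtain ⟨⟨k, u⟩, hk⟩ := x
      obtain ⟨⟨j, v⟩, hj⟩ := y
      show anc G r 0 (mkW G r k u hk) = anc G r 0 (mkW G r j v hj)
      rw [anc_mkW G r u hk (Nat.zero_le _), anc_mkW G r v hj (Nat.zero_le _)]
      refine Quotient.sound ⟨rfl, ?_⟩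
      obtain ⟨w⟩ := hconn u v
      exact ⟨w, fun x _ => Nat.zero_le _⟩

lemma T_connected (hconn : G.Connected) : (T G r).Connected := by
  have hne : Nonempty V := hconn.nonempty
  obtain ⟨v⟩ := hne
  refine { preconnected := fun a b => ?_, nonempty := ⟨mkW G r 0 v (Nat.zero_le _)⟩ }
  obtain ⟨wa, -⟩ := exists_walk_anc G r 0 (lvl G r a - 0) a rfl
  obtain ⟨wb, -⟩ := exists_walk_anc G r 0 (lvl G r b - 0) b rfl
  have h0 := anc_zero_eq G r hconn a b
  have ra : (T G r).Reachable a (anc G r 0 a) := ⟨wa⟩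
  have rb : (T G r).Reachable b (anc G r 0 b) := ⟨wb⟩
  exact ra.trans (h0 ▸ rb.symm)

lemma T_acyclic : (T G r).IsAcyclic := by
  classical
  intro v c hc
  obtain ⟨m, hm_mem', hm_min'⟩ := Finset.exists_min_image c.support.toFinset (lvl G r)
    ⟨v, by simp⟩
  have hm_mem : m ∈ c.support := by simpa using hm_mem'
  have hm_min : ∀ x ∈ c.support, lvl G r m ≤ lvl G r x := fun x hx =>
    hm_min' x (by simpa using hx)
  have hc' : (c.rotate m hm_mem).IsCycle := (SimpleGraph.Walk.isCycle_rotate hm_mem).2 hc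
  have hmin' : ∀ x ∈ (c.rotate m hm_mem).support, lvl G r m ≤ lvl G r x := by
    intro x hx
    rw [SimpleGraph.Walk.support_eq_cons] at hx
    rcases List.mem_cons.1 hx with hx' | hx'
    · exact hx' ▸ le_rfl
    · exact hm_min x (List.mem_of_mem_tail
        (((SimpleGraph.Walk.support_rotate c m hm_mem).mem_iff).1 hx'))
  revert hc' hmin'
  generalize c.rotate m hm_mem = c'
  intro hc' hmin'
  cases c' with
  | nil => simpa using hc'.three_le_length
  | @cons _ x _ hadj1 w1 =>
    have hx_mem : x ∈ (SimpleGraph.Walk.cons hadj1 w1).support :=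
      List.mem_cons_of_mem _ w1.start_mem_support
    have hx_lvl : lvl G r m ≤ lvl G r x := hmin' x hx_mem
    obtain ⟨h1, h2⟩ : lvl G r m + 1 = lvl G r x ∧ parent G r x = m := by
      rcases adj_cases G r hadj1 with ⟨ha, hb⟩ | ⟨ha, hb⟩
      · omega
      · exact ⟨ha, hb⟩
    obtain ⟨y, w3, hadj2, hw1⟩ : ∃ (y : W G r) (q : (T G r).Walk x y)
        (h' : (T G r).Adj y m), w1 = q.concat h' := by
      cases w1 with
      | nil => exfalso; have := hc'.three_le_length; simp at this
      | cons h p =>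
          obtain ⟨y, q, h', hq⟩ := SimpleGraph.Walk.exists_cons_eq_concat h p
          exact ⟨y, q, h', hq⟩
    subst hw1
    have hy_mem : y ∈ (SimpleGraph.Walk.cons hadj1 (w3.concat hadj2)).support := by
      apply List.mem_cons_of_mem
      rw [SimpleGraph.Walk.support_concat]
      simp [List.concat_eq_append]
    obtain ⟨h3, h4⟩ : lvl G r m + 1 = lvl G r y ∧ parent G r y = m := by
      rcases adj_cases G r hadj2 with ⟨ha, hb⟩ | ⟨ha, hb⟩
      · exact ⟨ha, hb⟩
      · have := hmin' y hy_mem; omega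
    have hnodup : ((w3.concat hadj2).support).Nodup := by
      have hn := hc'.support_nodup
      rwa [SimpleGraph.Walk.support_cons] at hn
    rw [SimpleGraph.Walk.support_concat] at hnodup
    have hnodup' := List.nodup_append.1 hnodup
    have hm_not : m ∉ w3.support := by
      have h5 := hnodup
      simp [List.nodup_append] at h5
      exact fun hm => h5.2 m hm rfl
    have hxy : x ≠ y := by
      intro hxy
      subst hxy
      have hn3 : w3.support.Nodup := hnodup'.1
      have : w3 = SimpleGraph.Walk.nil := by
        rwa [← SimpleGraph.Walk.isPath_iff_eq_nil, SimpleGraph.Walk.isPath_def]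
      subst this
      have h6 := hc'.three_le_length
      rw [SimpleGraph.Walk.length_cons, SimpleGraph.Walk.length_concat,
        SimpleGraph.Walk.length_nil] at h6
      omega
    have hw3lvl : ∀ z ∈ w3.support, lvl G r m ≤ lvl G r z := by
      intro z hz
      apply hmin'
      apply List.mem_cons_of_mem
      rw [SimpleGraph.Walk.support_concat]
      exact List.mem_append_left _ hz
    obtain ⟨K, hK1, hK2, hK3, hK4, hK5⟩ := walk_meet G r w3
    have hKlvl : lvl G r (anc G r K x) = K := by rw [lvl_anc]; omega
    have hKge : lvl G r m ≤ K := by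
      have := hw3lvl _ hK5
      omega
    rcases Nat.eq_or_lt_of_le hKge with hKeq | hKlt
    · apply hm_not
      have hax : anc G r K x = m := by
        rw [← hKeq]
        exact anc_pred G r h2 h1
      rwa [hax] at hK5
    · have hKx : K = lvl G r x := by omega
      rw [anc_of_le G r (le_of_eq hKx.symm), anc_of_le G r (by omega)] at hK3
      exact hxy hK3


section GraphSide

lemma dist_getVert_le (hconn : G.Connected) {u v : V} (w : G.Walk u v) (i : ℕ) :
    G.dist u (w.getVert i) ≤ i := by
  induction i with
  | zero => simp [SimpleGraph.Walk.getVert_zero]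
  | succ n ih =>
      by_cases hn : n < w.length
      · have hadj := w.adj_getVert_succ hn
        have htri := hconn.dist_triangle (u := u) (v := w.getVert n) (w := w.getVert (n + 1))
        have h1 : G.dist (w.getVert n) (w.getVert (n + 1)) ≤ 1 :=
          SimpleGraph.dist_le (SimpleGraph.Walk.cons hadj SimpleGraph.Walk.nil)
        omega
      · rw [w.getVert_of_length_le (by omega)]
        have := w.getVert_of_length_le (i := n) (by omega)
        rw [← this]
        omega

lemma getVert_dist_le (hconn : G.Connected) {u v : V} (w : G.Walk u v) (i : ℕ) :
    G.dist (w.getVert i) v ≤ w.length - i := by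
  by_cases hn : w.length ≤ i
  · rw [w.getVert_of_length_le hn, SimpleGraph.dist_self]
    exact Nat.zero_le _
  · have h1 : G.dist u (w.getVert i) ≤ i := dist_getVert_le G hconn w i
    -- use the reverse walk
    have h2 := dist_getVert_le G hconn w.reverse (w.length - i)
    rw [SimpleGraph.Walk.getVert_reverse] at h2
    have h3 : w.length - (w.length - i) = i := by omega
    rw [h3] at h2
    rw [SimpleGraph.dist_comm]
    simpa [SimpleGraph.dist_comm] using h2

lemma exists_prefix {u v : V} (w : G.Walk u v) :
    ∀ t, t ≤ w.length → ∃ w' : G.Walk u (w.getVert t), w'.length = t ∧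
      ∀ x ∈ w'.support, ∃ i, i ≤ t ∧ w.getVert i = x := by
  induction w with
  | nil =>
      intro t ht
      have ht0 : t = 0 := by simpa using ht
      subst ht0
      refine ⟨SimpleGraph.Walk.nil, rfl, fun x hx => ⟨0, le_rfl, ?_⟩⟩
      simp at hx
      simp [hx]
  | @cons a b c h w' ih =>
      intro t ht
      cases t with
      | zero =>
          refine ⟨SimpleGraph.Walk.nil.copy rfl ?_, by simp, ?_⟩
          · exact (SimpleGraph.Walk.getVert_zero _).symm
          · intro x hx
            simp at hx
            exact ⟨0, le_rfl, by rw [SimpleGraph.Walk.getVert_zero, hx]⟩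
      | succ n =>
          obtain ⟨w'', hw1, hw2⟩ := ih n (by simpa [SimpleGraph.Walk.length_cons] using ht)
          refine ⟨(SimpleGraph.Walk.cons h w'').copy rfl ?_, by simp [hw1], ?_⟩
          · rw [SimpleGraph.Walk.getVert_cons_succ]
          · intro x hx
            rw [SimpleGraph.Walk.support_copy, SimpleGraph.Walk.support_cons] at hx
            rcases List.mem_cons.1 hx with hx' | hx'
            · exact ⟨0, by omega, by rw [SimpleGraph.Walk.getVert_zero, hx']⟩
            · obtain ⟨i, hi1, hi2⟩ := hw2 x hx'
              exact ⟨i + 1, by omega, by rw [SimpleGraph.Walk.getVert_cons_succ, hi2]⟩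

lemma bottleneck (hconn : G.Connected)
    (hsep : ∀ x y p : V, G.dist x p + G.dist p y = G.dist x y →
      1 ≤ G.dist p x → 1 ≤ G.dist p y →
      ∃ A : Set V, p ∈ A ∧ A.ncard ≤ 3 ∧ (∀ a ∈ A, G.dist p a ≤ 1) ∧
        ∀ w : G.Walk x y, ∃ v ∈ w.support, v ∈ A)
    {K : ℕ} {u v : V} (hc : Conn G r K u v) :
    G.dist u v + 2 * K ≤ G.dist r u + G.dist r v + 7 := by
  have hKu : K ≤ G.dist r u := hc.le_left
  have hKv : K ≤ G.dist r v := hc.symm.le_left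
  by_cases hd : G.dist u v ≤ 7
  · omega
  by_cases ht : G.dist u v + K ≤ G.dist r u + 4
  · omega
  set d := G.dist u v with hd_def
  set t := G.dist r u + 4 - K with ht_def
  have ht1 : 1 ≤ t := by omega
  have ht2 : t + 1 ≤ d := by omega
  have htK : t + K = G.dist r u + 4 := by omega
  obtain ⟨γ, hγ⟩ := hconn.exists_walk_length_eq_dist u v
  set p := γ.getVert t with hp_def
  have h1 : G.dist u p ≤ t := dist_getVert_le G hconn γ t
  have h2 : G.dist p v ≤ d - t := by
    have := getVert_dist_le G hconn γ t
    rwa [hγ] at this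
  have h3 : d ≤ G.dist u p + G.dist p v := hconn.dist_triangle
  have h4 : G.dist u p = t := by omega
  have h5 : G.dist p v = d - t := by omega
  obtain ⟨A, hpA, -, hA1, hAsep⟩ := hsep u v p (by omega)
    (by rw [SimpleGraph.dist_comm]; omega) (by omega)
  obtain ⟨wc, hwc⟩ := hc
  obtain ⟨q, hq_mem, hqA⟩ := hAsep wc
  have h6 : K ≤ G.dist r q := hwc q hq_mem
  have h7 : G.dist p q ≤ 1 := hA1 q hqA
  have h8 : G.dist r q ≤ G.dist r p + G.dist p q := hconn.dist_triangle
  have h9 : K ≤ G.dist r p + 1 := by omega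
  obtain ⟨w1, hw1⟩ := hconn.exists_walk_length_eq_dist u r
  obtain ⟨w2, hw2⟩ := hconn.exists_walk_length_eq_dist r v
  obtain ⟨q', hq'_mem, hq'A⟩ := hAsep (w1.append w2)
  have h10 : G.dist p q' ≤ 1 := hA1 q' hq'A
  rcases (SimpleGraph.Walk.mem_support_append_iff _ _).1 hq'_mem with hm | hm
  · -- q' on the geodesic from u to r : contradiction
    exfalso
    obtain ⟨i, hgi, hile⟩ := SimpleGraph.Walk.mem_support_iff_exists_getVert.1 hm
    have ha : G.dist u q' ≤ i := by
      have := dist_getVert_le G hconn w1 i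
      rwa [hgi] at this
    have hb : G.dist q' r ≤ G.dist u r - i := by
      have := getVert_dist_le G hconn w1 i
      rwa [hgi, hw1] at this
    have hAB : G.dist u r = G.dist r u := SimpleGraph.dist_comm ..
    have hc1 : G.dist u p ≤ G.dist u q' + G.dist q' p := hconn.dist_triangle
    have hc2 : G.dist q' p = G.dist p q' := SimpleGraph.dist_comm ..
    have hc3 : G.dist r p ≤ G.dist r q' + G.dist q' p := hconn.dist_triangle
    have hc4 : G.dist r q' = G.dist q' r := SimpleGraph.dist_comm ..
    have hile' : i ≤ G.dist u r := by rw [← hw1]; exact hile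
    omega
  · obtain ⟨i, hgi, hile⟩ := SimpleGraph.Walk.mem_support_iff_exists_getVert.1 hm
    have ha : G.dist r q' ≤ i := by
      have := dist_getVert_le G hconn w2 i
      rwa [hgi] at this
    have hb : G.dist q' v ≤ G.dist r v - i := by
      have := getVert_dist_le G hconn w2 i
      rwa [hgi, hw2] at this
    have hc1 : G.dist p v ≤ G.dist p q' + G.dist q' v := hconn.dist_triangle
    have hc3 : G.dist r p ≤ G.dist r q' + G.dist q' p := hconn.dist_triangle
    have hc2 : G.dist q' p = G.dist p q' := SimpleGraph.dist_comm ..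
    have hile' : i ≤ G.dist r v := by rw [← hw2]; exact hile
    omega

end GraphSide

end QIT

/-- a connected graph in which, for every vertex `p` interior to a geodesic
from `x` to `y`, there is a set of at most 3 vertices containing `p`, all within distance
1 of `p`, whose removal separates `x` from `y`, is quasi-isometric to a simplicial tree. -/
theorem qi_to_tree_of_separation {V : Type} (G : SimpleGraph V) (hconn : G.Connected)
    (hsep : ∀ x y p : V, G.dist x p + G.dist p y = G.dist x y →
      1 ≤ G.dist p x → 1 ≤ G.dist p y →
      ∃ A : Set V, p ∈ A ∧ A.ncard ≤ 3 ∧ (∀ a ∈ A, G.dist p a ≤ 1) ∧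
        ∀ w : G.Walk x y, ∃ v ∈ w.support, v ∈ A) :
    ∃ (W : Type) (T : SimpleGraph W) (f : V → W) (l C : ℝ), T.IsTree ∧ 1 ≤ l ∧ 0 ≤ C ∧
      (∀ x y : V,
        (1 / l) * (G.dist x y : ℝ) - C ≤ (T.dist (f x) (f y) : ℝ) ∧
        (T.dist (f x) (f y) : ℝ) ≤ l * (G.dist x y : ℝ) + C) ∧
      (∀ w : W, ∃ x : V, (T.dist (f x) w : ℝ) ≤ C) := by
  classical
  obtain ⟨r⟩ := hconn.nonempty
  refine ⟨QIT.W G r, QIT.T G r, fun v => QIT.mkW G r (G.dist r v) v le_rfl, 3, 7,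
    ⟨QIT.T_connected G r hconn, QIT.T_acyclic G r⟩, by norm_num, by norm_num, ?_, ?_⟩
  · intro x y
    -- upper bound in ℕ
    have hup : (QIT.T G r).dist (QIT.mkW G r (G.dist r x) x le_rfl)
        (QIT.mkW G r (G.dist r y) y le_rfl) ≤ 3 * G.dist x y := by
      set d := G.dist x y with hdd
      set du := G.dist r x with hdu
      set dv := G.dist r y with hdv
      set m0 := du - d with hm0
      show (QIT.T G r).dist (QIT.mkW G r du x le_rfl) (QIT.mkW G r dv y le_rfl) ≤ 3 * d
      have htri1 : du ≤ dv + d := by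
        have h := hconn.dist_triangle (u := r) (v := y) (w := x)
        have h2 : G.dist y x = G.dist x y := SimpleGraph.dist_comm ..
        omega
      have htri2 : dv ≤ du + d := by
        have h := hconn.dist_triangle (u := r) (v := x) (w := y)
        omega
      have hm0y : m0 ≤ dv := by omega
      have hm0x : m0 ≤ du := by omega
      have hcxy : QIT.Conn G r m0 x y := by
        obtain ⟨γ, hγ⟩ := hconn.exists_walk_length_eq_dist x y
        refine ⟨γ, fun z hz => ?_⟩
        obtain ⟨i, hgi, hile⟩ := SimpleGraph.Walk.mem_support_iff_exists_getVert.1 hz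
        have h1 : G.dist x z ≤ i := by
          have := QIT.dist_getVert_le G hconn γ i; rwa [hgi] at this
        have h2 : du ≤ G.dist r z + G.dist z x := hconn.dist_triangle
        have h3 : G.dist z x = G.dist x z := SimpleGraph.dist_comm ..
        have hile' : γ.length = d := hγ
        omega
      obtain ⟨w1, hw1⟩ := QIT.exists_walk_anc G r m0
        (QIT.lvl G r (QIT.mkW G r du x le_rfl) - m0) (QIT.mkW G r du x le_rfl) rfl
      obtain ⟨w2, hw2⟩ := QIT.exists_walk_anc G r m0
        (QIT.lvl G r (QIT.mkW G r dv y le_rfl) - m0) (QIT.mkW G r dv y le_rfl) rfl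
      have e1 : QIT.anc G r m0 (QIT.mkW G r du x le_rfl) = QIT.mkW G r m0 x hm0x :=
        QIT.anc_mkW G r x le_rfl hm0x
      have e2 : QIT.anc G r m0 (QIT.mkW G r dv y le_rfl) = QIT.mkW G r m0 y hm0y :=
        QIT.anc_mkW G r y le_rfl hm0y
      have e3 : QIT.mkW G r m0 x hm0x = QIT.mkW G r m0 y hm0y :=
        (QIT.mkW_eq_iff G r hm0x hm0y).2 ⟨rfl, hcxy⟩
      have e4 : QIT.anc G r m0 (QIT.mkW G r du x le_rfl)
          = QIT.anc G r m0 (QIT.mkW G r dv y le_rfl) := by rw [e1, e2, e3]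
      have hdle := SimpleGraph.dist_le (w1.append ((w2.reverse).copy e4.symm rfl))
      rw [SimpleGraph.Walk.length_append, SimpleGraph.Walk.length_copy,
        SimpleGraph.Walk.length_reverse] at hdle
      have hlx : QIT.lvl G r (QIT.mkW G r du x le_rfl) = du := rfl
      have hly : QIT.lvl G r (QIT.mkW G r dv y le_rfl) = dv := rfl
      omega
    -- lower bound in ℕ
    have hlow : G.dist x y ≤ (QIT.T G r).dist (QIT.mkW G r (G.dist r x) x le_rfl)
        (QIT.mkW G r (G.dist r y) y le_rfl) + 7 := by
      have hreach := (QIT.T_connected G r hconn).preconnected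
        (QIT.mkW G r (G.dist r x) x le_rfl) (QIT.mkW G r (G.dist r y) y le_rfl)
      obtain ⟨ω, hω⟩ := hreach.exists_walk_length_eq_dist
      obtain ⟨K, hK1, hK2, hK3, hK4, hK5⟩ := QIT.walk_meet G r ω
      have hKx : K ≤ G.dist r x := hK1
      have hKy : K ≤ G.dist r y := hK2
      have e1 : QIT.anc G r K (QIT.mkW G r (G.dist r x) x le_rfl) = QIT.mkW G r K x hKx :=
        QIT.anc_mkW G r x le_rfl hKx
      have e2 : QIT.anc G r K (QIT.mkW G r (G.dist r y) y le_rfl) = QIT.mkW G r K y hKy :=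
        QIT.anc_mkW G r y le_rfl hKy
      have hcon : QIT.Conn G r K x y :=
        ((QIT.mkW_eq_iff G r hKx hKy).1 (by rw [← e1, ← e2, hK3])).2
      have hbot := QIT.bottleneck G r hconn hsep hcon
      have hlx : QIT.lvl G r (QIT.mkW G r (G.dist r x) x le_rfl) = G.dist r x := rfl
      have hly : QIT.lvl G r (QIT.mkW G r (G.dist r y) y le_rfl) = G.dist r y := rfl
      rw [hω] at hK4
      omega
    constructor
    · have h1 : (G.dist x y : ℝ) ≤ ((QIT.T G r).dist (QIT.mkW G r (G.dist r x) x le_rfl)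
          (QIT.mkW G r (G.dist r y) y le_rfl) : ℝ) + 7 := by exact_mod_cast hlow
      have h2 : (0:ℝ) ≤ (G.dist x y : ℝ) := Nat.cast_nonneg _
      linarith
    · have h1 : ((QIT.T G r).dist (QIT.mkW G r (G.dist r x) x le_rfl)
          (QIT.mkW G r (G.dist r y) y le_rfl) : ℝ) ≤ 3 * (G.dist x y : ℝ) := by
        exact_mod_cast hup
      linarith
  · intro w
    induction w using Quotient.inductionOn with
    | h z =>
      obtain ⟨⟨k, u⟩, hk⟩ := z
      obtain ⟨γ, hγ⟩ := hconn.exists_walk_length_eq_dist u r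
      have hkγ : k ≤ γ.length := by
        rw [hγ, SimpleGraph.dist_comm]; exact hk
      set x := γ.getVert (γ.length - k) with hx
      obtain ⟨w', hw'1, hw'2⟩ := QIT.exists_prefix G γ (γ.length - k) (by omega)
      have hdx1 : G.dist x r ≤ k := by
        have h := QIT.getVert_dist_le G hconn γ (γ.length - k)
        have h3 : γ.length - (γ.length - k) = k := by omega
        rwa [h3] at h
      have hdx2 : k ≤ G.dist r x := by
        have h1 : G.dist u x ≤ γ.length - k := QIT.dist_getVert_le G hconn γ _
        have h2 : G.dist r u ≤ G.dist r x + G.dist x u := hconn.dist_triangle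
        have h3 : G.dist x u = G.dist u x := SimpleGraph.dist_comm ..
        have h4 : G.dist r u = γ.length := by rw [hγ, SimpleGraph.dist_comm]
        omega
      have hecx : G.dist r x = k := by
        have h5 : G.dist r x = G.dist x r := SimpleGraph.dist_comm ..
        omega
      have hconn_kux : QIT.Conn G r k u x := by
        refine ⟨w', fun z hz => ?_⟩
        obtain ⟨i, hi1, hi2⟩ := hw'2 z hz
        have h1 : G.dist u z ≤ i := by
          have := QIT.dist_getVert_le G hconn γ i; rwa [hi2] at this
        have h2 : G.dist r u ≤ G.dist r z + G.dist z u := hconn.dist_triangle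
        have h3 : G.dist z u = G.dist u z := SimpleGraph.dist_comm ..
        have h4 : G.dist r u = γ.length := by rw [hγ, SimpleGraph.dist_comm]
        omega
      refine ⟨x, ?_⟩
      have hfx : QIT.mkW G r (G.dist r x) x le_rfl = QIT.mkW G r k u hk := by
        refine (QIT.mkW_eq_iff G r le_rfl hk).2 ⟨hecx, ?_⟩
        have := (hconn_kux.symm).mono (le_of_eq hecx)
        exact this
      show ((QIT.T G r).dist (QIT.mkW G r (G.dist r x) x le_rfl) (QIT.mkW G r k u hk) : ℝ) ≤ 7
      rw [hfx, SimpleGraph.dist_self]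
      norm_num
end

section
/- In a graph G whose every triangle separates the graph and in which the dual tree condition of Lemma (bottleneck) holds, the midpoint condition holds with constant L = 3/2: for all x, y and the midpoint m of a geodesic [x,y], every path from x to y passes within distance at most 3/2 of m. -/
/-- in a connected graph in which every interior vertex of a geodesic lies
on a triangle whose vertex set separates the endpoints, the midpoint condition holds with
constant `L = 3/2`: for all `x, y` and any (vertex-)midpoint `m` of a geodesic from `x`
to `y`, every path from `x` to `y` passes within distance at most `3/2` of `m`. -/
theorem midpoint_constant_three_halves {V : Type*} (G : SimpleGraph V)
    (hconn : G.Connected)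
    (hbot : ∀ x y p : V, G.dist x p + G.dist p y = G.dist x y →
      1 ≤ G.dist p x → 1 ≤ G.dist p y →
      ∃ a b c : V, G.Adj a b ∧ G.Adj b c ∧ G.Adj a c ∧ (p = a ∨ p = b ∨ p = c) ∧
        ∀ w : G.Walk x y, a ∈ w.support ∨ b ∈ w.support ∨ c ∈ w.support) :
    ∀ x y m : V, G.dist x m + G.dist m y = G.dist x y →
      |(G.dist x m : ℤ) - (G.dist y m : ℤ)| ≤ 1 →
      ∀ w : G.Walk x y, ∃ v ∈ w.support, (G.dist v m : ℝ) ≤ 3 / 2 := by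
  intro x y m hgeo _ w
  by_cases hx : G.dist x m = 0
  · exact ⟨x, w.start_mem_support, by rw [hx]; norm_num⟩
  by_cases hy : G.dist m y = 0
  · refine ⟨y, w.end_mem_support, ?_⟩
    rw [SimpleGraph.dist_comm] at hy
    rw [hy]; norm_num
  have hmx : 1 ≤ G.dist m x := by
    rw [SimpleGraph.dist_comm]; omega
  have hmy : 1 ≤ G.dist m y := by omega
  obtain ⟨a, b, c, hab, hbc, hac, hm, hsep⟩ := hbot x y m hgeo hmx hmy
  have hda : G.dist a m ≤ 1 := by
    rcases hm with h | h | h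
    · subst h; simp [SimpleGraph.dist_self]
    · subst h; rw [SimpleGraph.dist_comm]; exact le_of_eq (SimpleGraph.dist_eq_one_iff_adj.mpr hab.symm)
    · subst h; rw [SimpleGraph.dist_comm]; exact le_of_eq (SimpleGraph.dist_eq_one_iff_adj.mpr hac.symm)
  have hdb : G.dist b m ≤ 1 := by
    rcases hm with h | h | h
    · subst h; exact le_of_eq (SimpleGraph.dist_eq_one_iff_adj.mpr hab.symm)
    · subst h; simp [SimpleGraph.dist_self]
    · subst h; rw [SimpleGraph.dist_comm]; exact le_of_eq (SimpleGraph.dist_eq_one_iff_adj.mpr hbc.symm)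
  have hdc : G.dist c m ≤ 1 := by
    rcases hm with h | h | h
    · subst h; exact le_of_eq (SimpleGraph.dist_eq_one_iff_adj.mpr hac.symm)
    · subst h; exact le_of_eq (SimpleGraph.dist_eq_one_iff_adj.mpr hbc.symm)
    · subst h; simp [SimpleGraph.dist_self]
  have hle : ∀ n : ℕ, n ≤ 1 → (n : ℝ) ≤ 3 / 2 := by
    intro n hn
    calc (n : ℝ) ≤ 1 := by exact_mod_cast hn
    _ ≤ 3 / 2 := by norm_num
  rcases hsep w with h | h | h
  · exact ⟨a, h, hle _ hda⟩
  · exact ⟨b, h, hle _ hdb⟩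
  · exact ⟨c, h, hle _ hdc⟩
end

section
/- Suppose a group M acts on a simplicial complex C by simplicial automorphisms, and there is an increasing exhaustion C = ⋃ Yₙ by subcomplexes such that for each n, every locally injective simplicial map Yₙ → C coincides with the restriction of a unique element of M. Then every locally injective simplicial self-map φ: C → C is induced by a unique element of M; in particular the map M → Aut(C) given by the action is surjective onto the monoid of locally injective simplicial self-maps. -/
/-- The set of vertices of a subcomplex `K` (a set of simplices, given as finsets). -/
def cxVerts {V : Type*} (K : Set (Finset V)) : Set V :=
  {v | ∃ s ∈ K, v ∈ s}

/-- The star of a vertex `v` in a subcomplex `K`: all vertices lying in a common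
simplex of `K` with `v`. -/
def cxStar {V : Type*} (K : Set (Finset V)) (v : V) : Set V :=
  {u | ∃ s ∈ K, v ∈ s ∧ u ∈ s}

/-- if a group `M` acts simplicially on a simplicial complex `C` which is
exhausted by an increasing sequence of subcomplexes `Yₙ`, each of which is rigid (every
locally injective simplicial map `Yₙ → C` is the restriction of a unique element of `M`),
then every locally injective simplicial self-map of `C` is induced by a unique element
of `M`. -/
theorem rigid_exhaustion_global {V : Type*} [DecidableEq V] {M : Type*} [Group M]
    [MulAction M V] (C : Set (Finset V))
    (hact : ∀ (m : M), ∀ s ∈ C, s.image (fun v => m • v) ∈ C)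
    (Y : ℕ → Set (Finset V))
    (hmono : Monotone Y) (hsub : ∀ n, Y n ⊆ C) (hunion : (⋃ n, Y n) = C)
    (hrigid : ∀ (n : ℕ) (f : V → V),
      (∀ s ∈ Y n, s.image f ∈ C) →
      (∀ v ∈ cxVerts (Y n), Set.InjOn f (cxStar (Y n) v)) →
      ∃! m : M, ∀ v ∈ cxVerts (Y n), f v = m • v) :
    ∀ φ : V → V,
      (∀ s ∈ C, s.image φ ∈ C) →
      (∀ v ∈ cxVerts C, Set.InjOn φ (cxStar C v)) →
      ∃! m : M, ∀ v ∈ cxVerts C, φ v = m • v := by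
  intro φ hφC hφinj
  have hvsub : ∀ n, cxVerts (Y n) ⊆ cxVerts C := by
    intro n v ⟨s, hs, hvs⟩; exact ⟨s, hsub n hs, hvs⟩
  have hssub : ∀ n v, cxStar (Y n) v ⊆ cxStar C v := by
    intro n v u ⟨s, hs, hv, hu⟩; exact ⟨s, hsub n hs, hv, hu⟩
  have key : ∀ n, ∃! m : M, ∀ v ∈ cxVerts (Y n), φ v = m • v := by
    intro n
    exact hrigid n φ (fun s hs => hφC s (hsub n hs))
      (fun v hv => (hφinj v (hvsub n hv)).mono (hssub n v))
  set m : ℕ → M := fun n => (key n).choose with hm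
  have hmspec : ∀ n, ∀ v ∈ cxVerts (Y n), φ v = m n • v := fun n => (key n).choose_spec.1
  have hmono' : ∀ n, cxVerts (Y n) ⊆ cxVerts (Y (n + 1)) := by
    intro n v ⟨s, hs, hvs⟩
    exact ⟨s, hmono (Nat.le_succ n) hs, hvs⟩
  have hconst : ∀ n, m n = m 0 := by
    intro n
    induction n with
    | zero => rfl
    | succ k ih =>
      have : m (k + 1) = m k :=
        (key k).choose_spec.2 (m (k + 1)) (fun v hv => hmspec (k + 1) v (hmono' k hv))
      rw [this, ih]
  refine ⟨m 0, ?_, ?_⟩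
  · intro v hv
    obtain ⟨s, hs, hvs⟩ := hv
    rw [← hunion] at hs
    obtain ⟨n, hn⟩ := Set.mem_iUnion.mp hs
    have := hmspec n v ⟨s, hn, hvs⟩
    rwa [hconst n] at this
  · intro m' hm'
    exact (key 0).choose_spec.2 m' (fun v hv => hm' v (hvsub 0 hv))
end

section
/- In a bipartite graph C = V₁ ⊔ V₂ where every vertex of V₂ has degree 2 (and distinct V₂-vertices have distinct neighbor pairs), any locally injective simplicial map φ: X → C defined on a finite subgraph X of diameter 2 is injective, and φ sends vertices of degree ≥ 3 in X to vertices of V₁. -/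
/-- let `C` be a bipartite graph on `V₁ ⊕ V₂` in which every vertex of
`V₂` has degree exactly 2 (with distinct neighbour-pairs for distinct `V₂`-vertices).
Then any locally injective graph map `φ : X → C` defined on a finite connected subgraph
`X` of diameter at most 2 is injective on `X`, and sends vertices of degree `≥ 3` in `X`
to vertices of `V₁`. -/
theorem locInj_on_diameter_two {V₁ V₂ : Type*} (C : SimpleGraph (V₁ ⊕ V₂))
    (hbip₁ : ∀ a b : V₁, ¬ C.Adj (Sum.inl a) (Sum.inl b))
    (hbip₂ : ∀ a b : V₂, ¬ C.Adj (Sum.inr a) (Sum.inr b))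
    (hdeg : ∀ β : V₂, ∃ a a' : V₁, a ≠ a' ∧
      ∀ v, C.Adj (Sum.inr β) v ↔ v = Sum.inl a ∨ v = Sum.inl a')
    (hdist : ∀ β β' : V₂, (∀ v, C.Adj (Sum.inr β) v ↔ C.Adj (Sum.inr β') v) → β = β')
    (X : C.Subgraph) (hXfin : X.verts.Finite) (hXconn : X.Connected)
    (hXdiam : ∀ a b : X.verts, X.coe.dist a b ≤ 2)
    (f : V₁ ⊕ V₂ → V₁ ⊕ V₂)
    (hsimp : ∀ a b, X.Adj a b → C.Adj (f a) (f b))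
    (hloc : ∀ v ∈ X.verts, Set.InjOn f {w | w = v ∨ X.Adj v w}) :
    Set.InjOn f X.verts ∧
      ∀ v ∈ X.verts, 3 ≤ (X.neighborSet v).ncard → ∃ a : V₁, f v = Sum.inl a := by
  have hXc : X.coe.Connected := hXconn.coe
  constructor
  · intro u hu v hv hfuv
    by_contra hne
    by_cases hadj : X.Adj u v
    · exact C.loopless.irrefl (f v) (hfuv ▸ hsimp u v hadj)
    · -- distance is 2
      have hne' : (⟨u, hu⟩ : X.verts) ≠ ⟨v, hv⟩ := by
        simp [Subtype.ext_iff]; exact hne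
      have hpos : 0 < X.coe.dist ⟨u, hu⟩ ⟨v, hv⟩ := hXc.pos_dist_of_ne hne'
      have hne1 : X.coe.dist ⟨u, hu⟩ ⟨v, hv⟩ ≠ 1 := by
        intro h1
        exact hadj (SimpleGraph.dist_eq_one_iff_adj.mp h1)
      have hd2 : X.coe.dist ⟨u, hu⟩ ⟨v, hv⟩ = 2 := by
        have := hXdiam ⟨u, hu⟩ ⟨v, hv⟩
        omega
      obtain ⟨p, hp⟩ := SimpleGraph.exists_walk_of_dist_ne_zero
        (G := X.coe) (u := ⟨u, hu⟩) (v := ⟨v, hv⟩) (by omega)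
      rw [hd2] at hp
      set w : X.verts := p.getVert 1 with hw
      have h1 : X.coe.Adj ⟨u, hu⟩ w := by
        have := p.adj_getVert_succ (i := 0) (by omega)
        simpa using this
      have h2 : X.coe.Adj w ⟨v, hv⟩ := by
        have := p.adj_getVert_succ (i := 1) (by omega)
        rw [show (1 : ℕ) + 1 = p.length by omega] at this
        simpa [p.getVert_length] using this
      have hX1 : X.Adj (↑w) u := X.adj_symm h1
      have hX2 : X.Adj (↑w) v := h2
      have := hloc (↑w) w.2 (Set.mem_setOf.mpr (Or.inr hX1))
        (Set.mem_setOf.mpr (Or.inr hX2)) hfuv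
      exact hne this
  · intro v hv hdeg3
    rcases hfv : f v with a | β
    · exact ⟨a, rfl⟩
    exfalso
    obtain ⟨a, a', _, hβ⟩ := hdeg β
    have hsub : f '' (X.neighborSet v) ⊆ {Sum.inl a, Sum.inl a'} := by
      rintro _ ⟨w, hwX, rfl⟩
      have : C.Adj (f v) (f w) := hsimp v w hwX
      rw [hfv] at this
      rcases (hβ (f w)).mp this with h | h <;> simp [h]
    have hNfin : (X.neighborSet v).Finite :=
      hXfin.subset (X.neighborSet_subset_verts v)
    have hinj : Set.InjOn f (X.neighborSet v) := by
      intro x hx y hy hxy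
      exact hloc v hv (Or.inr hx) (Or.inr hy) hxy
    have h1 : (f '' X.neighborSet v).ncard = (X.neighborSet v).ncard :=
      Set.ncard_image_of_injOn hinj
    have h2 : (f '' X.neighborSet v).ncard ≤ ({Sum.inl a, Sum.inl a'} : Set (V₁ ⊕ V₂)).ncard :=
      Set.ncard_le_ncard hsub (Set.toFinite _)
    have h3 : ({Sum.inl a, Sum.inl a'} : Set (V₁ ⊕ V₂)).ncard ≤ 2 := by
      apply le_trans (Set.ncard_insert_le _ _)
      simp
    omega
end
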